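/- Let (Ω, μ) be a measure space, C ≥ 0, and let s₁, s₂, m₁, m₂ : Ω → ℝ³ be measurable functions with ‖s₁(x)‖ ≤ C for μ-a.e. x, and with ∫‖m₁ − m₂‖² dμ < ∞ and ∫‖s₁ − s₂‖² dμ < ∞. Then ∫ |(s₁ × m₁ − s₂ × m₂)·(s₁ − s₂)| dμ ≤ C (∫‖m₁ − m₂‖² dμ)^{1/2} (∫‖s₁ − s₂‖² dμ)^{1/2}. -/

import Mathlib

noncomputable section
open scoped BigOperators

/-- Euclidean dot product on ℝ³. -/
def dot3 (a b : Fin 3 → ℝ) : ℝ := ∑ i, a i * b i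

/-- Euclidean norm on ℝ³. -/
def norm3 (a : Fin 3 → ℝ) : ℝ := Real.sqrt (dot3 a a)

/-- Cross product on ℝ³. -/
def cross3 (a b : Fin 3 → ℝ) : Fin 3 → ℝ :=
  ![a 1 * b 2 - a 2 * b 1, a 2 * b 0 - a 0 * b 2, a 0 * b 1 - a 1 * b 0]

/-- Frobenius inner product of 3×3 real matrices. -/
def mdot (A B : Matrix (Fin 3) (Fin 3) ℝ) : ℝ := ∑ i, ∑ j, A i j * B i j

/-- Frobenius norm of a 3×3 real matrix. -/
def fnorm (A : Matrix (Fin 3) (Fin 3) ℝ) : ℝ := Real.sqrt (mdot A A)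

open MeasureTheory

lemma dot3_self_nonneg (a : Fin 3 → ℝ) : 0 ≤ dot3 a a := by
  simp only [dot3, Fin.sum_univ_three]
  nlinarith [sq_nonneg (a 0), sq_nonneg (a 1), sq_nonneg (a 2)]

lemma norm3_sq (a : Fin 3 → ℝ) : norm3 a ^ 2 = dot3 a a :=
  Real.sq_sqrt (dot3_self_nonneg a)

lemma norm3_nonneg (a : Fin 3 → ℝ) : 0 ≤ norm3 a := Real.sqrt_nonneg _

lemma cs3 (u c : Fin 3 → ℝ) : (dot3 u c) ^ 2 ≤ dot3 u u * dot3 c c := by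
  simp only [dot3, Fin.sum_univ_three]
  nlinarith [sq_nonneg (u 0 * c 1 - u 1 * c 0), sq_nonneg (u 0 * c 2 - u 2 * c 0),
    sq_nonneg (u 1 * c 2 - u 2 * c 1)]

lemma lagrange (a b : Fin 3 → ℝ) :
    dot3 (cross3 a b) (cross3 a b) = dot3 a a * dot3 b b - (dot3 a b) ^ 2 := by
  simp only [dot3, cross3, Fin.sum_univ_three, Matrix.cons_val_zero, Matrix.cons_val_one,
    Matrix.head_cons, Matrix.cons_val_two, Matrix.tail_cons]
  ring

lemma triple_bound (a b c : Fin 3 → ℝ) :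
    |dot3 (cross3 a b) c| ≤ norm3 a * norm3 b * norm3 c := by
  have h1 : (dot3 (cross3 a b) c) ^ 2 ≤ (norm3 a * norm3 b * norm3 c) ^ 2 := by
    calc (dot3 (cross3 a b) c) ^ 2 ≤ dot3 (cross3 a b) (cross3 a b) * dot3 c c := cs3 _ _
    _ ≤ dot3 a a * dot3 b b * dot3 c c := by
        have := lagrange a b
        nlinarith [sq_nonneg (dot3 a b), dot3_self_nonneg c]
    _ = (norm3 a * norm3 b * norm3 c) ^ 2 := by
        rw [mul_pow, mul_pow, norm3_sq, norm3_sq, norm3_sq]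
  have h2 : 0 ≤ norm3 a * norm3 b * norm3 c :=
    mul_nonneg (mul_nonneg (norm3_nonneg a) (norm3_nonneg b)) (norm3_nonneg c)
  have h3 : |dot3 (cross3 a b) c| ^ 2 ≤ (norm3 a * norm3 b * norm3 c) ^ 2 := by
    simpa [sq_abs] using h1
  exact (pow_le_pow_iff_left₀ (abs_nonneg _) h2 two_ne_zero).mp h3

lemma meas_dot3 {Ω : Type*} [MeasurableSpace Ω] {u v : Ω → Fin 3 → ℝ}
    (hu : Measurable u) (hv : Measurable v) :
    Measurable (fun x => dot3 (u x) (v x)) := by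
  simp only [dot3]
  exact Finset.measurable_sum _ fun i _ =>
    ((measurable_pi_apply i).comp hu).mul ((measurable_pi_apply i).comp hv)

lemma meas_norm3 {Ω : Type*} [MeasurableSpace Ω] {u : Ω → Fin 3 → ℝ}
    (hu : Measurable u) : Measurable (fun x => norm3 (u x)) :=
  Real.continuous_sqrt.measurable.comp (meas_dot3 hu hu)

lemma meas_cross3 {Ω : Type*} [MeasurableSpace Ω] {u v : Ω → Fin 3 → ℝ}
    (hu : Measurable u) (hv : Measurable v) :
    Measurable (fun x => cross3 (u x) (v x)) := by
  apply measurable_pi_lambda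
  intro i
  fin_cases i <;>
    simp only [cross3, Matrix.cons_val_zero, Matrix.cons_val_one, Matrix.head_cons,
      Matrix.cons_val_two, Matrix.tail_cons] <;>
    exact (((measurable_pi_apply _).comp hu).mul ((measurable_pi_apply _).comp hv)).sub
      (((measurable_pi_apply _).comp hu).mul ((measurable_pi_apply _).comp hv))

lemma key_identity (a b c d : Fin 3 → ℝ) :
    dot3 (cross3 a c - cross3 b d) (a - b) = dot3 (cross3 a (c - d)) (a - b) := by
  simp only [dot3, cross3, Fin.sum_univ_three, Pi.sub_apply, Matrix.cons_val_zero,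
    Matrix.cons_val_one, Matrix.head_cons, Matrix.cons_val_two, Matrix.tail_cons]
  ring


/-- integrated bound on the difference of spin–magnetization coupling
terms. -/
theorem coupling_difference_integral_bound
    {Ω : Type*} [MeasurableSpace Ω] (μ : Measure Ω) (C : ℝ) (hC : 0 ≤ C)
    (s₁ s₂ m₁ m₂ : Ω → Fin 3 → ℝ)
    (hs₁ : Measurable s₁) (hs₂ : Measurable s₂)
    (hm₁ : Measurable m₁) (hm₂ : Measurable m₂)
    (hbound : ∀ᵐ x ∂μ, norm3 (s₁ x) ≤ C)
    (hmint : Integrable (fun x => norm3 (m₁ x - m₂ x) ^ 2) μ)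
    (hsint : Integrable (fun x => norm3 (s₁ x - s₂ x) ^ 2) μ) :
    ∫ x, |dot3 (cross3 (s₁ x) (m₁ x) - cross3 (s₂ x) (m₂ x)) (s₁ x - s₂ x)| ∂μ
      ≤ C * Real.sqrt (∫ x, norm3 (m₁ x - m₂ x) ^ 2 ∂μ)
          * Real.sqrt (∫ x, norm3 (s₁ x - s₂ x) ^ 2 ∂μ) := by
  set f : Ω → ℝ := fun x => norm3 (m₁ x - m₂ x) with hfdef
  set g : Ω → ℝ := fun x => norm3 (s₁ x - s₂ x) with hgdef
  have hfm : Measurable f := meas_norm3 (hm₁.sub hm₂)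
  have hgm : Measurable g := meas_norm3 (hs₁.sub hs₂)
  have hf0 : ∀ x, 0 ≤ f x := fun x => norm3_nonneg _
  have hg0 : ∀ x, 0 ≤ g x := fun x => norm3_nonneg _
  have hhm : Measurable
      (fun x => |dot3 (cross3 (s₁ x) (m₁ x) - cross3 (s₂ x) (m₂ x)) (s₁ x - s₂ x)|) :=
    (meas_dot3 ((meas_cross3 hs₁ hm₁).sub (meas_cross3 hs₂ hm₂)) (hs₁.sub hs₂)).abs
  have hptw : ∀ᵐ x ∂μ,
      |dot3 (cross3 (s₁ x) (m₁ x) - cross3 (s₂ x) (m₂ x)) (s₁ x - s₂ x)|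
        ≤ C * (f x * g x) := by
    filter_upwards [hbound] with x hx
    rw [key_identity]
    calc |dot3 (cross3 (s₁ x) (m₁ x - m₂ x)) (s₁ x - s₂ x)|
        ≤ norm3 (s₁ x) * norm3 (m₁ x - m₂ x) * norm3 (s₁ x - s₂ x) := triple_bound _ _ _
      _ ≤ C * (f x * g x) := by
          rw [mul_assoc]
          exact mul_le_mul_of_nonneg_right hx (mul_nonneg (hf0 x) (hg0 x))
  have hbig : Integrable (fun x => (C / 2) * (f x ^ 2 + g x ^ 2)) μ :=
    (hmint.add hsint).const_mul (C / 2)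
  have hCfg_le : ∀ x, C * (f x * g x) ≤ (C / 2) * (f x ^ 2 + g x ^ 2) := by
    intro x
    nlinarith [sq_nonneg (f x - g x), hf0 x, hg0 x, mul_nonneg (hf0 x) (hg0 x)]
  have hCfg_int : Integrable (fun x => C * (f x * g x)) μ := by
    refine hbig.mono' ((hfm.mul hgm).const_mul C).aestronglyMeasurable (ae_of_all _ fun x => ?_)
    rw [Real.norm_of_nonneg (mul_nonneg hC (mul_nonneg (hf0 x) (hg0 x)))]
    exact hCfg_le x
  have h_int : Integrable
      (fun x => |dot3 (cross3 (s₁ x) (m₁ x) - cross3 (s₂ x) (m₂ x)) (s₁ x - s₂ x)|) μ := by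
    refine hCfg_int.mono' hhm.aestronglyMeasurable ?_
    filter_upwards [hptw] with x hx
    simpa using hx
  have step1 :
      ∫ x, |dot3 (cross3 (s₁ x) (m₁ x) - cross3 (s₂ x) (m₂ x)) (s₁ x - s₂ x)| ∂μ
        ≤ ∫ x, C * (f x * g x) ∂μ := integral_mono_ae h_int hCfg_int hptw
  have hpq : Real.HolderConjugate 2 2 := Real.holderConjugate_iff.mpr ⟨by norm_num, by norm_num⟩
  have hf2 : MemLp f (ENNReal.ofReal 2) μ := by
    rw [show ENNReal.ofReal 2 = 2 by norm_num]
    exact (memLp_two_iff_integrable_sq hfm.aestronglyMeasurable).2 hmint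
  have hg2 : MemLp g (ENNReal.ofReal 2) μ := by
    rw [show ENNReal.ofReal 2 = 2 by norm_num]
    exact (memLp_two_iff_integrable_sq hgm.aestronglyMeasurable).2 hsint
  have holder := integral_mul_le_Lp_mul_Lq_of_nonneg hpq (ae_of_all _ hf0) (ae_of_all _ hg0) hf2 hg2
  have hconv : ∀ (h : Ω → ℝ), (∫ a, h a ^ (2:ℝ) ∂μ) ^ ((1:ℝ)/2)
      = Real.sqrt (∫ a, h a ^ 2 ∂μ) := by
    intro h
    rw [Real.sqrt_eq_rpow]
    congr 1
    refine integral_congr_ae (ae_of_all _ fun a => ?_)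
    rw [show ((2:ℝ)) = ((2:ℕ):ℝ) by norm_num]
    exact Real.rpow_natCast (h a) 2
  rw [hconv f, hconv g] at holder
  calc ∫ x, |dot3 (cross3 (s₁ x) (m₁ x) - cross3 (s₂ x) (m₂ x)) (s₁ x - s₂ x)| ∂μ
      ≤ ∫ x, C * (f x * g x) ∂μ := step1
    _ = C * ∫ x, f x * g x ∂μ := integral_const_mul C _
    _ ≤ C * (Real.sqrt (∫ x, f x ^ 2 ∂μ) * Real.sqrt (∫ x, g x ^ 2 ∂μ)) :=
        mul_le_mul_of_nonneg_left holder hC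
    _ = C * Real.sqrt (∫ x, norm3 (m₁ x - m₂ x) ^ 2 ∂μ)
          * Real.sqrt (∫ x, norm3 (s₁ x - s₂ x) ^ 2 ∂μ) := by rw [mul_assoc]
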